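/- arXiv:1511.02447 — 2 statements merged into one kernel-verified Lean document; each statement's English description precedes it below -/
import Mathlib

section
/- Let A be a weighted shift on ℓ²(ℕ₀) with A e_n = c(n) e_{n+l} where c(n)² ≤ (n+k)^k (k ≥ 1, l ∈ ℤ, c(n)=0 for invalid indices), and let A_M := P_M A P_M where P_M is the orthogonal projection onto span{e_n : 0 ≤ n ≤ M}. Then for all β ≥ 0 and M ≥ k, the operator norm of A − A_M from the (β + k/2 + r)-weighted space to the β-weighted space is at most k^{k/2}(k+1)^β (M−k+2)^{−r} for every r ≥ 0; in particular if r > 0 then (A − A_M)φ → 0 in β-norm as M → ∞ for every φ in the (β+k/2+r)-weighted space. -/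
/-!
Since `|l| ≤ k`, the difference `A - A_M` only involves coefficients `f n` with
`n ≥ M - k + 1`, and sends them to index `m = n + l ≤ n + k`. For such `n` the growth
`c(n)² ≤ (n + k)^k ≤ k^k (1 + n)^k` and the weight
`(1 + m)^{2β} ≤ (k + 1)^{2β} (1 + n)^{2β}` are absorbed by `(1 + n)^{2(β + k/2 + r)}`,
leaving the factor `(1 + n)^{-2r} ≤ (M - k + 2)^{-2r}`. Summing over `m` is a reindexing
along the injective shift `n ↦ n + l`, which can only lose terms.
-/

/-- The weighted shift `A e_n = c(n) e_{n+l}` acting on sequences. -/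
noncomputable def shiftOp (l : ℤ) (c : ℤ → ℝ) (f : ℕ → ℂ) : ℕ → ℂ :=
  fun m => if 0 ≤ (m : ℤ) - l then ((c ((m : ℤ) - l) : ℝ) : ℂ) * f ((m : ℤ) - l).toNat else 0

/-- The level-`M` truncation `A_M = P_M A P_M` of the weighted shift. -/
noncomputable def shiftOpTrunc (M : ℕ) (l : ℤ) (c : ℤ → ℝ) (f : ℕ → ℂ) : ℕ → ℂ :=
  fun m => if m ≤ M ∧ 0 ≤ (m : ℤ) - l ∧ (m : ℤ) - l ≤ (M : ℤ) then
    ((c ((m : ℤ) - l) : ℝ) : ℂ) * f ((m : ℤ) - l).toNat else 0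

open Function Real Filter Topology

lemma extend_natCast_apply {α : Type*} [Zero α] (g : ℕ → α) (z : ℤ) :
    extend ((↑) : ℕ → ℤ) g 0 z = if 0 ≤ z then g z.toNat else 0 := by
  split_ifs with hz
  · lift z to ℕ using hz
    rw [(Nat.cast_injective (R := ℤ)).extend_apply, Int.toNat_natCast]
  · exact extend_apply' _ _ _ (by rintro ⟨n, rfl⟩; exact hz n.cast_nonneg)

section Shift

variable {g : ℕ → ℝ} (a : ℤ)

lemma summable_shift (hg : Summable g) :
    Summable fun m : ℕ => if 0 ≤ (m : ℤ) - a then g ((m : ℤ) - a).toNat else 0 := by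
  simp_rw [← extend_natCast_apply]
  exact ((summable_extend_zero (Nat.cast_injective (R := ℤ))).2 hg).comp_injective
    ((sub_left_injective (b := a)).comp (Nat.cast_injective (R := ℤ)))

lemma tsum_shift_le (hg : Summable g) (hg0 : ∀ n, 0 ≤ g n) :
    ∑' m : ℕ, (if 0 ≤ (m : ℤ) - a then g ((m : ℤ) - a).toNat else 0) ≤ ∑' n, g n := by
  simp_rw [← extend_natCast_apply]
  rw [← tsum_extend_zero (Nat.cast_injective (R := ℤ)) g]
  refine tsum_comp_le_tsum_of_inj ((summable_extend_zero (Nat.cast_injective (R := ℤ))).2 hg)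
    (fun z => ?_) ((sub_left_injective (b := a)).comp (Nat.cast_injective (R := ℤ)))
  rw [extend_natCast_apply]
  split_ifs
  exacts [hg0 _, le_rfl]

end Shift

lemma add_pow_le_mul_pow {x : ℝ} (hx : 0 ≤ x) (k : ℕ) :
    (x + k) ^ k ≤ k ^ k * (1 + x) ^ k := by
  rcases k.eq_zero_or_pos with rfl | hk
  · simp
  rw [← mul_pow]
  have : (1 : ℝ) ≤ k := by exact_mod_cast hk
  exact pow_le_pow_left₀ (by positivity) (by nlinarith) k

/-- Applied with `x = n` the source index, `y = n + l` the target index, `T = M - k + 2`. -/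
lemma sq_mul_rpow_le_of_le_add {k : ℕ} {β r a x y T : ℝ} (hβ : 0 ≤ β) (hr : 0 ≤ r)
    (hx : 0 ≤ x) (hy : 0 ≤ y) (hyx : y ≤ x + k) (hT : 0 < T) (hTx : T ≤ 1 + x)
    (ha : a ^ 2 ≤ (x + k) ^ k) :
    a ^ 2 * (1 + y) ^ (2 * β) ≤
      ((k : ℝ) ^ ((k : ℝ) / 2) * (k + 1) ^ β * T ^ (-r)) ^ 2 *
        (1 + x) ^ (2 * (β + k / 2 + r)) := by
  have hu : 0 < 1 + x := by linarith
  have hweight : (1 + y) ^ (2 * β) ≤ (k + 1) ^ (2 * β) * (1 + x) ^ (2 * β) := by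
    rw [← mul_rpow (by positivity) hu.le]
    exact rpow_le_rpow (by positivity) (by nlinarith) (by positivity)
  have hgain : 1 ≤ (T ^ (-r)) ^ 2 * (1 + x) ^ (2 * r) := calc
    (1 : ℝ) = (T ^ (-r)) ^ 2 * T ^ (2 * r) := by
      rw [← rpow_mul_natCast hT.le, ← rpow_add hT]; ring_nf; exact (rpow_zero T).symm
    _ ≤ (T ^ (-r)) ^ 2 * (1 + x) ^ (2 * r) := by gcongr
  have hsplit :
      ((k : ℝ) ^ ((k : ℝ) / 2) * (k + 1) ^ β * T ^ (-r)) ^ 2 * (1 + x) ^ (2 * (β + k / 2 + r))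
      = (k ^ k * (1 + x) ^ k) * ((k + 1) ^ (2 * β) * (1 + x) ^ (2 * β)) *
        ((T ^ (-r)) ^ 2 * (1 + x) ^ (2 * r)) := by
    rw [mul_pow, mul_pow, ← rpow_mul_natCast (Nat.cast_nonneg k),
      ← rpow_mul_natCast (by positivity),
      show 2 * (β + k / 2 + r) = (k : ℝ) + 2 * β + 2 * r by ring, rpow_add hu, rpow_add hu,
      rpow_natCast, ← rpow_natCast (k : ℝ) k]
    ring_nf
  rw [hsplit]
  calc a ^ 2 * (1 + y) ^ (2 * β)
      ≤ (k ^ k * (1 + x) ^ k) * ((k + 1) ^ (2 * β) * (1 + x) ^ (2 * β)) := by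
        gcongr
        exact ha.trans (add_pow_le_mul_pow hx k)
    _ ≤ _ := le_mul_of_one_le_right (by positivity) hgain

lemma shiftOp_sub_shiftOpTrunc (M : ℕ) (l : ℤ) (c : ℤ → ℝ) (f : ℕ → ℂ) (m : ℕ) :
    shiftOp l c f m - shiftOpTrunc M l c f m =
      if m ≤ M ∧ (m : ℤ) - l ≤ M then 0 else shiftOp l c f m := by
  unfold shiftOp shiftOpTrunc
  split_ifs <;> first | (exfalso; omega) | simp

lemma norm_shiftOp_sub_shiftOpTrunc_sq_mul_le {l : ℤ} {k M : ℕ} (hl : l.natAbs ≤ k)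
    (hM : k ≤ M) {β r : ℝ} (hβ : 0 ≤ β) (hr : 0 ≤ r) {c : ℤ → ℝ}
    (hc : ∀ n : ℤ, 0 ≤ n → c n ^ 2 ≤ ((n : ℝ) + k) ^ k) (f : ℕ → ℂ) (m : ℕ) :
    ‖shiftOp l c f m - shiftOpTrunc M l c f m‖ ^ 2 * (1 + (m : ℝ)) ^ (2 * β) ≤
      ((k : ℝ) ^ ((k : ℝ) / 2) * (k + 1) ^ β * ((M : ℝ) - k + 2) ^ (-r)) ^ 2 *
        if 0 ≤ (m : ℤ) - l then
          ‖f ((m : ℤ) - l).toNat‖ ^ 2 *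
            (1 + (((m : ℤ) - l).toNat : ℝ)) ^ (2 * (β + k / 2 + r))
        else 0 := by
  rw [shiftOp_sub_shiftOpTrunc]
  rcases lt_or_ge ((m : ℤ) - l) 0 with hneg | hnn
  · have : ¬ l ≤ (m : ℤ) := by omega
    simp [shiftOp, this]
  obtain ⟨n, hn⟩ := Int.eq_ofNat_of_zero_le hnn
  simp only [shiftOp, hn, Nat.cast_nonneg, if_true, Int.toNat_natCast]
  split_ifs with hin
  · rw [norm_zero, zero_pow two_ne_zero, zero_mul]
    positivity
  have hnM : (M : ℝ) - k + 2 ≤ 1 + n := by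
    have : (M : ℝ) + 1 ≤ n + k := by exact_mod_cast (show (M : ℤ) + 1 ≤ n + k by omega)
    linarith
  have hmn : (m : ℝ) ≤ n + k := by exact_mod_cast (show (m : ℤ) ≤ n + k by omega)
  have hMk : (0 : ℝ) < M - k + 2 := by linarith [(k.cast_le (α := ℝ)).2 hM]
  have hcn := hc n n.cast_nonneg
  rw [Int.cast_natCast] at hcn
  rw [norm_mul, Complex.norm_real, norm_eq_abs, mul_pow, sq_abs]
  calc c n ^ 2 * ‖f n‖ ^ 2 * (1 + (m : ℝ)) ^ (2 * β)
      = ‖f n‖ ^ 2 * (c n ^ 2 * (1 + (m : ℝ)) ^ (2 * β)) := by ring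
    _ ≤ ‖f n‖ ^ 2 *
          (((k : ℝ) ^ ((k : ℝ) / 2) * (k + 1) ^ β * ((M : ℝ) - k + 2) ^ (-r)) ^ 2 *
            (1 + (n : ℝ)) ^ (2 * (β + k / 2 + r))) :=
        mul_le_mul_of_nonneg_left
          (sq_mul_rpow_le_of_le_add hβ hr n.cast_nonneg m.cast_nonneg hmn hMk hnM hcn)
          (by positivity)
    _ = _ := by ring

lemma tsum_norm_shiftOp_sub_shiftOpTrunc_sq_mul_le {l : ℤ} {k M : ℕ} (hl : l.natAbs ≤ k)
    (hM : k ≤ M) {β r : ℝ} (hβ : 0 ≤ β) (hr : 0 ≤ r) {c : ℤ → ℝ}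
    (hc : ∀ n : ℤ, 0 ≤ n → c n ^ 2 ≤ ((n : ℝ) + k) ^ k) {f : ℕ → ℂ}
    (hf : Summable fun n : ℕ => ‖f n‖ ^ 2 * (1 + (n : ℝ)) ^ (2 * (β + k / 2 + r))) :
    ∑' m : ℕ, ‖shiftOp l c f m - shiftOpTrunc M l c f m‖ ^ 2 * (1 + (m : ℝ)) ^ (2 * β) ≤
      ((k : ℝ) ^ ((k : ℝ) / 2) * (k + 1) ^ β * ((M : ℝ) - k + 2) ^ (-r)) ^ 2 *
        ∑' n : ℕ, ‖f n‖ ^ 2 * (1 + (n : ℝ)) ^ (2 * (β + k / 2 + r)) := by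
  have hpt := norm_shiftOp_sub_shiftOpTrunc_sq_mul_le hl hM hβ hr hc f
  have hdom := (summable_shift l hf).mul_left
    (((k : ℝ) ^ ((k : ℝ) / 2) * (k + 1) ^ β * ((M : ℝ) - k + 2) ^ (-r)) ^ 2)
  calc _ ≤ _ := (hdom.of_nonneg_of_le (fun m => by positivity) hpt).tsum_le_tsum hpt hdom
    _ = _ := tsum_mul_left
    _ ≤ _ := mul_le_mul_of_nonneg_left (tsum_shift_le l hf fun n => by positivity)
      (sq_nonneg _)

theorem stmt_14_general (l : ℤ) (k : ℕ) (hl : l.natAbs ≤ k)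
    (β r : ℝ) (hβ : 0 ≤ β) (hr : 0 ≤ r) (c : ℤ → ℝ)
    (hc : ∀ n : ℤ, 0 ≤ n → c n ^ 2 ≤ ((n : ℝ) + (k : ℝ)) ^ k)
    (f : ℕ → ℂ)
    (hf : Summable fun n : ℕ =>
      ‖f n‖ ^ 2 * (1 + (n : ℝ)) ^ (2 * (β + (k : ℝ) / 2 + r))) :
    (∀ M : ℕ, k ≤ M →
      Real.sqrt (∑' m : ℕ,
          ‖shiftOp l c f m - shiftOpTrunc M l c f m‖ ^ 2 * (1 + (m : ℝ)) ^ (2 * β))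
        ≤ (k : ℝ) ^ ((k : ℝ) / 2) * ((k : ℝ) + 1) ^ β * ((M : ℝ) - (k : ℝ) + 2) ^ (-r) *
          Real.sqrt (∑' n : ℕ,
            ‖f n‖ ^ 2 * (1 + (n : ℝ)) ^ (2 * (β + (k : ℝ) / 2 + r)))) ∧
    (0 < r → Filter.Tendsto
      (fun M : ℕ => ∑' m : ℕ,
        ‖shiftOp l c f m - shiftOpTrunc M l c f m‖ ^ 2 * (1 + (m : ℝ)) ^ (2 * β))
      Filter.atTop (nhds 0)) := by
  have hbound M (hM : k ≤ M) := tsum_norm_shiftOp_sub_shiftOpTrunc_sq_mul_le hl hM hβ hr hc hf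
  refine ⟨fun M hM => ?_, fun hr₀ => ?_⟩
  · have hMk : (0 : ℝ) ≤ M - k + 2 := by linarith [(k.cast_le (α := ℝ)).2 hM]
    rw [← sqrt_sq (by positivity :
        0 ≤ (k : ℝ) ^ ((k : ℝ) / 2) * (k + 1) ^ β * ((M : ℝ) - k + 2) ^ (-r)),
      ← sqrt_mul (sq_nonneg _)]
    exact sqrt_le_sqrt (hbound M hM)
  · have hdecay : Tendsto (fun M : ℕ => ((M : ℝ) - k + 2) ^ (-r)) atTop (𝓝 0) :=
      (tendsto_rpow_neg_atTop hr₀).comp <| tendsto_atTop_add_const_right _ _ <|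
        tendsto_atTop_add_const_right _ _ tendsto_natCast_atTop_atTop
    have hlimit := ((hdecay.const_mul ((k : ℝ) ^ ((k : ℝ) / 2) * (k + 1) ^ β)).pow 2).mul_const
      (∑' n : ℕ, ‖f n‖ ^ 2 * (1 + (n : ℝ)) ^ (2 * (β + k / 2 + r)))
    rw [mul_zero, zero_pow two_ne_zero, zero_mul] at hlimit
    exact squeeze_zero' (.of_forall fun M => tsum_nonneg fun m => by positivity)
      (eventually_atTop.2 ⟨k, hbound⟩) hlimit

/-- For the weighted shift by `l` (`|l| ≤ k`, `k ≥ 1`, `c(n)² ≤ (n+k)^k`,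
`c(n)=0` for `n<0`) and `M ≥ k`, the `(β+k/2+r) → β` operator norm of `A − A_M`
is at most `k^{k/2}(k+1)^β (M−k+2)^{−r}`; in particular for `r > 0`,
`(A − A_M)f → 0` in `β`-norm as `M → ∞`. -/
theorem stmt_14 (l : ℤ) (k : ℕ) (hk : 1 ≤ k) (hl : l.natAbs ≤ k)
    (β r : ℝ) (hβ : 0 ≤ β) (hr : 0 ≤ r) (c : ℤ → ℝ)
    (hc0 : ∀ n : ℤ, n < 0 → c n = 0) (hcnn : ∀ n : ℤ, 0 ≤ c n)
    (hc : ∀ n : ℤ, 0 ≤ n → c n ^ 2 ≤ ((n : ℝ) + (k : ℝ)) ^ k)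
    (f : ℕ → ℂ)
    (hf : Summable fun n : ℕ =>
      ‖f n‖ ^ 2 * (1 + (n : ℝ)) ^ (2 * (β + (k : ℝ) / 2 + r))) :
    (∀ M : ℕ, k ≤ M →
      Real.sqrt (∑' m : ℕ,
          ‖shiftOp l c f m - shiftOpTrunc M l c f m‖ ^ 2 * (1 + (m : ℝ)) ^ (2 * β))
        ≤ (k : ℝ) ^ ((k : ℝ) / 2) * ((k : ℝ) + 1) ^ β * ((M : ℝ) - (k : ℝ) + 2) ^ (-r) *
          Real.sqrt (∑' n : ℕ,
            ‖f n‖ ^ 2 * (1 + (n : ℝ)) ^ (2 * (β + (k : ℝ) / 2 + r)))) ∧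
    (0 < r → Filter.Tendsto
      (fun M : ℕ => ∑' m : ℕ,
        ‖shiftOp l c f m - shiftOpTrunc M l c f m‖ ^ 2 * (1 + (m : ℝ)) ^ (2 * β))
      Filter.atTop (nhds 0)) :=
  stmt_14_general l k hl β r hβ hr c hc f hf
end

section
/- Let K be a Hilbert space, A ≥ I a self-adjoint operator, and C : ℝ → B(K) operator-norm continuous with C(t)D(A) ⊆ D(A) and [A, C(t)]A^{−1} bounded. If U(t,s) solves ∂_t U = C(t)U, U(s,s)=I, then for ψ₀ ∈ D(A) the quantity ‖A U(t,s)ψ₀‖ satisfies the bound ‖A U(t,s)ψ₀‖ ≤ exp( |∫_s^t [ (1/2)‖C(τ)+C(τ)*‖ + ‖[A,C(τ)]A^{−1}‖ ] dτ| ) · ‖Aψ₀‖. -/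
/-!
Here `A` is everywhere defined with bounded inverse, hence bounded, and `φ τ = A U(τ,s) ψ₀`
solves `φ' = A C φ = (C + D) φ`. Thus `|d/dτ ‖φ‖²| = 2 |Re ⟪φ, (C + D) φ⟫| ≤ 2 g ‖φ‖²` with
`g = ½ ‖C + C*‖ + ‖D‖`, since `2 Re ⟪x, C x⟫ = Re ⟪x, (C + C*) x⟫`, and Gronwall's inequality,
run forwards or backwards in time, bounds `‖φ t‖²` by `exp (2 |∫ₛᵗ g|) ‖φ s‖²`.
-/

open RCLike intervalIntegral
open scoped InnerProductSpace

theorem le_exp_integral_mul_of_hasDerivAt_le {r r' g : ℝ → ℝ}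
    (hr : ∀ τ, HasDerivAt r (r' τ) τ) (hg : Continuous g) (hbound : ∀ τ, r' τ ≤ g τ * r τ)
    {s t : ℝ} (hst : s ≤ t) :
    r t ≤ Real.exp (∫ τ in s..t, g τ) * r s := by
  set G : ℝ → ℝ := fun τ => ∫ σ in s..τ, g σ
  have hG : ∀ τ, HasDerivAt G (g τ) τ := fun τ => (hg.integral_hasStrictDerivAt s τ).hasDerivAt
  have hanti : Antitone fun τ => r τ * Real.exp (-G τ) := by
    refine antitone_of_hasDerivAt_nonpos (fun τ => (hr τ).mul (hG τ).neg.exp) fun τ => ?_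
    have := mul_le_mul_of_nonneg_right (hbound τ) (Real.exp_pos (-G τ)).le
    change r' τ * _ + r τ * (Real.exp (-G τ) * -g τ) ≤ 0
    linarith
  have hts : r t * Real.exp (-G t) ≤ r s := by
    simpa [G] using hanti hst
  calc r t = Real.exp (G t) * (r t * Real.exp (-G t)) := by
        rw [mul_left_comm, ← Real.exp_add, add_neg_cancel, Real.exp_zero, mul_one]
    _ ≤ Real.exp (G t) * r s := by gcongr

theorem le_exp_abs_integral_mul_of_abs_hasDerivAt_le {r r' g : ℝ → ℝ}
    (hr : ∀ τ, HasDerivAt r (r' τ) τ) (hg : Continuous g) (hbound : ∀ τ, |r' τ| ≤ g τ * r τ)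
    {s : ℝ} (hs : 0 ≤ r s) (t : ℝ) :
    r t ≤ Real.exp |∫ τ in s..t, g τ| * r s := by
  rcases le_total s t with hst | hts
  · calc r t ≤ Real.exp (∫ τ in s..t, g τ) * r s :=
          le_exp_integral_mul_of_hasDerivAt_le hr hg (fun τ => (le_abs_self _).trans (hbound τ)) hst
      _ ≤ Real.exp |∫ τ in s..t, g τ| * r s := by gcongr; exact le_abs_self _
  · -- time reversal turns the lower bound `-g r ≤ r'` into an upper bound
    have hrev := le_exp_integral_mul_of_hasDerivAt_le (r := fun τ => r (-τ))
      (r' := fun τ => -r' (-τ)) (g := fun τ => g (-τ))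
      (fun τ => by simpa [Function.comp_def] using (hr (-τ)).comp τ (hasDerivAt_neg' τ))
      (hg.comp continuous_neg)
      (fun τ => (neg_le_abs _).trans (hbound _)) (neg_le_neg hts)
    rw [integral_comp_neg, neg_neg, neg_neg, integral_symm] at hrev
    calc r t ≤ Real.exp (-∫ τ in s..t, g τ) * r s := hrev
      _ ≤ Real.exp |∫ τ in s..t, g τ| * r s := by gcongr; exact neg_le_abs _

section InnerProduct

variable {𝕜 E : Type*} [RCLike 𝕜] [NormedAddCommGroup E] [InnerProductSpace 𝕜 E]

theorem norm_le_exp_abs_integral_mul_norm [NormedSpace ℝ E] {f f' : ℝ → E} {g : ℝ → ℝ}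
    (hf : ∀ τ, HasDerivAt f (f' τ) τ) (hg : Continuous g)
    (hbound : ∀ τ, |re ⟪f τ, f' τ⟫_𝕜| ≤ g τ * ‖f τ‖ ^ 2) (s t : ℝ) :
    ‖f t‖ ≤ Real.exp |∫ τ in s..t, g τ| * ‖f s‖ := by
  have hsq : ∀ τ, HasDerivAt (fun σ => ‖f σ‖ ^ 2) (2 * re ⟪f τ, f' τ⟫_𝕜) τ := by
    intro τ
    have := reCLM.hasFDerivAt.comp_hasDerivAt τ ((hf τ).inner 𝕜 (hf τ))
    simp only [Function.comp_def, reCLM_apply, inner_self_eq_norm_sq, map_add,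
      ← inner_conj_symm (f' τ), conj_re] at this
    rw [two_mul]
    exact this
  have := le_exp_abs_integral_mul_of_abs_hasDerivAt_le hsq (hg.const_mul 2)
    (fun τ => by rw [abs_mul, abs_two]; linarith [hbound τ]) (sq_nonneg ‖f s‖) t
  rw [integral_const_mul, abs_mul, abs_two] at this
  refine le_of_pow_le_pow_left₀ two_ne_zero (by positivity) ?_
  rwa [mul_pow, sq (Real.exp _), ← Real.exp_add, ← two_mul]

theorem abs_re_inner_apply_le (T : E →L[𝕜] E) (x : E) :
    |re ⟪x, T x⟫_𝕜| ≤ ‖T‖ * ‖x‖ ^ 2 :=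
  calc |re ⟪x, T x⟫_𝕜| ≤ ‖x‖ * ‖T x‖ := (abs_re_le_norm _).trans (norm_inner_le_norm _ _)
    _ ≤ ‖x‖ * (‖T‖ * ‖x‖) := by gcongr; exact T.le_opNorm x
    _ = ‖T‖ * ‖x‖ ^ 2 := by ring

variable [CompleteSpace E]

theorem re_inner_apply_add_adjoint (T : E →L[𝕜] E) (x : E) :
    re ⟪x, (T + T.adjoint) x⟫_𝕜 = 2 * re ⟪x, T x⟫_𝕜 := by
  rw [add_apply, inner_add_right, ContinuousLinearMap.adjoint_inner_right,
    map_add, ← inner_conj_symm x (T x), conj_re]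
  ring

theorem abs_re_inner_apply_le_half_norm_add_adjoint (T : E →L[𝕜] E) (x : E) :
    |re ⟪x, T x⟫_𝕜| ≤ 1 / 2 * ‖T + T.adjoint‖ * ‖x‖ ^ 2 := by
  have := abs_re_inner_apply_le (T + T.adjoint) x
  rw [re_inner_apply_add_adjoint, abs_mul, abs_two] at this
  linarith

theorem abs_re_inner_add_apply_le (T S : E →L[𝕜] E) (x : E) :
    |re ⟪x, (T + S) x⟫_𝕜| ≤ (1 / 2 * ‖T + T.adjoint‖ + ‖S‖) * ‖x‖ ^ 2 :=
  calc |re ⟪x, (T + S) x⟫_𝕜| ≤ |re ⟪x, T x⟫_𝕜| + |re ⟪x, S x⟫_𝕜| := by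
        rw [add_apply, inner_add_right, map_add]; exact abs_add_le _ _
    _ ≤ 1 / 2 * ‖T + T.adjoint‖ * ‖x‖ ^ 2 + ‖S‖ * ‖x‖ ^ 2 :=
        add_le_add (abs_re_inner_apply_le_half_norm_add_adjoint T x) (abs_re_inner_apply_le S x)
    _ = (1 / 2 * ‖T + T.adjoint‖ + ‖S‖) * ‖x‖ ^ 2 := by ring

end InnerProduct

theorem LinearMap.continuous_of_inverse {𝕜 E F : Type*} [NontriviallyNormedField 𝕜]
    [NormedAddCommGroup E] [NormedSpace 𝕜 E] [CompleteSpace E]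
    [NormedAddCommGroup F] [NormedSpace 𝕜 F] [CompleteSpace F]
    (A : F →ₗ[𝕜] E) (B : E →L[𝕜] F) (h₁ : ∀ x, A (B x) = x) (h₂ : ∀ x, B (A x) = x) :
    Continuous A :=
  (LinearEquiv.ofLinearMap (B : E →ₗ[𝕜] F) A (LinearMap.ext h₂)
    (LinearMap.ext h₁)).continuous_symm B.continuous

theorem stmt_17_general {K : Type*} [NormedAddCommGroup K] [InnerProductSpace ℂ K] [CompleteSpace K]
    (A : K →ₗ[ℂ] K)
    (Ainv : K →L[ℂ] K) (hAinv₁ : ∀ x, A (Ainv x) = x) (hAinv₂ : ∀ x, Ainv (A x) = x)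
    (C : ℝ → K →L[ℂ] K) (hC : Continuous C)
    (D : ℝ → K →L[ℂ] K)
    (hDdef : ∀ (t : ℝ) (x : K), D t x = A ((C t) (Ainv x)) - (C t) x)
    (U : ℝ → ℝ → K →L[ℂ] K)
    (hU : ∀ s t : ℝ, HasDerivAt (fun τ => U τ s) ((C t).comp (U t s)) t)
    (hU0 : ∀ s : ℝ, U s s = ContinuousLinearMap.id ℂ K) :
    ∀ (s t : ℝ) (ψ₀ : K),
      ‖A (U t s ψ₀)‖ ≤
        Real.exp |∫ τ in s..t,
            ((1 / 2) * ‖C τ + ContinuousLinearMap.adjoint (C τ)‖ + ‖D τ‖)| * ‖A ψ₀‖ := by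
  intro s t ψ₀
  let Acl : K →L[ℂ] K := ⟨A, A.continuous_of_inverse Ainv hAinv₁ hAinv₂⟩
  have hcomm : ∀ τ y, A (C τ y) = (C τ + D τ) (A y) := by
    intro τ y
    rw [add_apply, hDdef, hAinv₂]
    abel
  have hD : Continuous D := by
    have : D = fun τ => Acl ∘L C τ ∘L Ainv - C τ := by
      ext τ x
      simp [Acl, hDdef]
    rw [this]
    fun_prop
  have hf : ∀ τ, HasDerivAt (fun σ => A (U σ s ψ₀)) ((C τ + D τ) (A (U τ s ψ₀))) τ := by
    intro τ
    rw [← hcomm]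
    simpa [Acl, Function.comp_def] using
      ((Acl ∘L ContinuousLinearMap.apply ℂ K ψ₀).restrictScalars ℝ).hasFDerivAt.comp_hasDerivAt τ
        (hU s τ)
  have hg : Continuous fun τ => 1 / 2 * ‖C τ + (C τ).adjoint‖ + ‖D τ‖ := by
    fun_prop
  simpa [hU0] using norm_le_exp_abs_integral_mul_norm hf hg
    (fun τ => abs_re_inner_add_apply_le (C τ) (D τ) _) s t

/-- Let `A ≥ I` be a self-adjoint (symmetric, bijective) operator, `C(t)` bounded
operators preserving `D(A)` with `[A,C(t)]A^{−1}` bounded (realized by the bounded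
operator `D t` with `D t x = A(C t (A⁻¹x)) − C t x`), and `U(t,s)` the evolution
solving `∂_t U = C(t)U`, `U(s,s) = I`. Then for `ψ₀ ∈ D(A)`,
`‖A U(t,s)ψ₀‖ ≤ exp(|∫_s^t ((1/2)‖C(τ)+C(τ)*‖ + ‖[A,C(τ)]A^{−1}‖) dτ|) ‖Aψ₀‖`. -/
theorem stmt_17 {K : Type*} [NormedAddCommGroup K] [InnerProductSpace ℂ K] [CompleteSpace K]
    (A : K →ₗ[ℂ] K)
    (hsym : ∀ x y : K, (inner ℂ (A x) y : ℂ) = (inner ℂ x (A y) : ℂ))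
    (hAI : ∀ x : K, ‖x‖ ^ 2 ≤ ((inner ℂ (A x) x : ℂ)).re)
    (Ainv : K →L[ℂ] K) (hAinv₁ : ∀ x, A (Ainv x) = x) (hAinv₂ : ∀ x, Ainv (A x) = x)
    (C : ℝ → K →L[ℂ] K) (hC : Continuous C)
    (D : ℝ → K →L[ℂ] K) (hD : Continuous D)
    (hDdef : ∀ (t : ℝ) (x : K), D t x = A ((C t) (Ainv x)) - (C t) x)
    (U : ℝ → ℝ → K →L[ℂ] K)
    (hU : ∀ s t : ℝ, HasDerivAt (fun τ => U τ s) ((C t).comp (U t s)) t)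
    (hU0 : ∀ s : ℝ, U s s = ContinuousLinearMap.id ℂ K) :
    ∀ (s t : ℝ) (ψ₀ : K),
      ‖A (U t s ψ₀)‖ ≤
        Real.exp |∫ τ in s..t,
            ((1 / 2) * ‖C τ + ContinuousLinearMap.adjoint (C τ)‖ + ‖D τ‖)| * ‖A ψ₀‖ :=
  stmt_17_general A Ainv hAinv₁ hAinv₂ C hC D hDdef U hU hU0
end
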